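/- arXiv:2310.01537 — 2 statements merged into one kernel-verified Lean document; each statement's English description precedes it below -/
import Mathlib

section
/- The random element h(Y, X₁,…,X_N) and the rank vector R of (g(Y,X₁),…,g(Y,X_N)) are independent. -/
open MeasureTheory ProbabilityTheory
open scoped ENNReal NNReal

/-- The rank vector of a tuple of reals: `rankVec r k = #{j : r j ≤ r k}`.
When the entries are pairwise distinct this is a permutation of `{1, …, N}`. -/
noncomputable def rankVec {N : ℕ} (r : Fin N → ℝ) : Fin N → ℕ :=
  fun k => (Finset.univ.filter fun j => r j ≤ r k).card


lemma measurable_rankVec {N : ℕ} : Measurable (rankVec (N := N)) := by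
  apply measurable_pi_lambda
  intro k
  have : (fun r : Fin N → ℝ => rankVec r k)
      = fun r => ∑ j : Fin N, if r j ≤ r k then 1 else 0 := by
    funext r
    rw [rankVec, Finset.card_filter]
  rw [this]
  exact Finset.measurable_sum _ fun j _ =>
    Measurable.ite (measurableSet_le (measurable_pi_apply j) (measurable_pi_apply k))
      measurable_const measurable_const

lemma rankVec_comp_perm {N : ℕ} (r : Fin N → ℝ) (p : Equiv.Perm (Fin N)) :
    rankVec (fun k => r (p k)) = fun k => rankVec r (p k) := by
  funext k
  simp only [rankVec]
  apply Finset.card_bij (fun j _ => p j)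
  · intro a ha; simpa using (Finset.mem_filter.1 ha).2
  · intro a _ b _ hab; exact p.injective hab
  · intro b hb
    refine ⟨p.symm b, ?_, by simp⟩
    simp only [Finset.mem_filter, Finset.mem_univ, true_and] at hb ⊢
    simpa using hb

lemma rankVec_exists_perm {N : ℕ} (r : Fin N → ℝ) (hr : Function.Injective r) :
    ∃ q : Equiv.Perm (Fin N), rankVec r = fun k => (q k : ℕ) + 1 := by
  have h1 : ∀ k, 1 ≤ rankVec r k := by
    intro k
    have : k ∈ Finset.univ.filter fun j => r j ≤ r k := by simp
    exact Finset.card_pos.2 ⟨k, this⟩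
  have hle : ∀ k, rankVec r k ≤ N := fun k =>
    (Finset.card_filter_le _ _).trans (by simp)
  have hinj : Function.Injective (rankVec r) := by
    intro k k' hkk'
    by_contra hne
    have hrne : r k ≠ r k' := fun e => hne (hr e)
    rcases lt_or_gt_of_ne hrne with hlt | hlt
    · have hss : (Finset.univ.filter fun j => r j ≤ r k)
          ⊂ (Finset.univ.filter fun j => r j ≤ r k') := by
        constructor
        · intro j hj
          simp only [Finset.mem_filter, Finset.mem_univ, true_and] at hj ⊢
          exact hj.trans hlt.le
        · intro hsub
          have := hsub (by simp : k' ∈ Finset.univ.filter fun j => r j ≤ r k')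
          simp only [Finset.mem_filter, Finset.mem_univ, true_and] at this
          exact absurd this (not_le.2 hlt)
      exact absurd hkk' (Finset.card_lt_card hss).ne
    · have hss : (Finset.univ.filter fun j => r j ≤ r k')
          ⊂ (Finset.univ.filter fun j => r j ≤ r k) := by
        constructor
        · intro j hj
          simp only [Finset.mem_filter, Finset.mem_univ, true_and] at hj ⊢
          exact hj.trans hlt.le
        · intro hsub
          have := hsub (by simp : k ∈ Finset.univ.filter fun j => r j ≤ r k)
          simp only [Finset.mem_filter, Finset.mem_univ, true_and] at this
          exact absurd this (not_le.2 hlt)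
      exact absurd hkk'.symm (Finset.card_lt_card hss).ne
  have hq0 : ∀ k : Fin N, rankVec r k - 1 < N := fun k => by
    have := h1 k; have := hle k; omega
  let q0 : Fin N → Fin N := fun k => ⟨rankVec r k - 1, hq0 k⟩
  have hq0inj : Function.Injective q0 := by
    intro k k' hk
    apply hinj
    have := h1 k; have := h1 k'
    have : rankVec r k - 1 = rankVec r k' - 1 := congrArg Fin.val hk
    omega
  refine ⟨Equiv.ofBijective q0 (Finite.injective_iff_bijective.mp hq0inj), ?_⟩
  funext k
  have := h1 k
  simp only [Equiv.ofBijective_apply, q0]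
  omega

/-- The random element `h(Y, X₁,…,X_N)` and the rank vector `R` of
`(g(Y,X₁),…,g(Y,X_N))` are independent. -/
theorem h_indep_rank_vector
    {Ω : Type*} [MeasurableSpace Ω] (P : Measure Ω) [IsProbabilityMeasure P]
    {𝓧 ℰ 𝓕 : Type*} [MeasurableSpace 𝓧] [MeasurableSpace ℰ] [MeasurableSpace 𝓕]
    (N : ℕ) (X : Fin N → Ω → 𝓧) (Y : Ω → ℰ)
    (hY : Measurable Y) (hX : ∀ k, Measurable (X k))
    -- σ(Y), σ(X₁), …, σ(X_N) form an independent family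
    (hIndep : iIndep (fun i : Option (Fin N) =>
      i.elim (MeasurableSpace.comap Y inferInstance)
        fun k => MeasurableSpace.comap (X k) inferInstance) P)
    -- X₁, …, X_N are identically distributed
    (hId : ∀ j k : Fin N, IdentDistrib (X j) (X k) P P)
    (g : ℰ → 𝓧 → ℝ) (hg : Measurable (Function.uncurry g))
    -- almost surely the values g(Y,X₁),…,g(Y,X_N) are pairwise distinct
    (hdist : ∀ᵐ ω ∂P, Function.Injective fun k => g (Y ω) (X k ω))
    -- h is measurable and symmetric in its last N arguments
    (h : ℰ → (Fin N → 𝓧) → 𝓕) (hh : Measurable (Function.uncurry h))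
    (hsymm : ∀ (y : ℰ) (x : Fin N → 𝓧) (p : Equiv.Perm (Fin N)),
      h y (fun k => x (p k)) = h y x) :
    IndepFun (fun ω => h (Y ω) fun k => X k ω)
      (fun ω => rankVec fun k => g (Y ω) (X k ω)) P := by
  classical
  -- basic measurability
  have hXvec : Measurable (fun ω k => X k ω) :=
    measurable_pi_lambda _ fun k => hX k
  set H : Ω → 𝓕 := fun ω => h (Y ω) fun k => X k ω with hHdef
  set Rf : Ω → Fin N → ℕ := fun ω => rankVec fun k => g (Y ω) (X k ω) with hRdef
  have hHmeas : Measurable H := hh.comp (hY.prodMk hXvec)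
  have hRmeas : Measurable Rf := by
    apply measurable_rankVec.comp
    exact measurable_pi_lambda _ fun k => hg.comp (hY.prodMk (hX k))
  -- step 1: independence computation on rectangles
  have hcalc : ∀ (s : Set ℰ), MeasurableSet s → ∀ (u : Fin N → Set 𝓧),
      (∀ k, MeasurableSet (u k)) →
      P (Y ⁻¹' s ∩ ⋂ j, X j ⁻¹' u j) = P (Y ⁻¹' s) * ∏ j, P (X j ⁻¹' u j) := by
    intro s hs u hu
    have := hIndep.meas_iInter (s := fun i : Option (Fin N) =>
      i.elim (Y ⁻¹' s) fun j => X j ⁻¹' u j) ?_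
    · rw [Set.iInter_option, Fintype.prod_option] at this
      simpa using this
    · intro i
      cases i with
      | none => exact ⟨s, hs, rfl⟩
      | some j => exact ⟨u j, hu j, rfl⟩
  -- step 2: permuting the X's does not change the joint law of (Y, X)
  have hWmeas : ∀ p : Equiv.Perm (Fin N),
      Measurable (fun ω => (Y ω, fun k => X (p k) ω)) := fun p =>
    hY.prodMk (measurable_pi_lambda _ fun k => hX (p k))
  have hW1 : Measurable (fun ω => (Y ω, fun k => X k ω)) := hY.prodMk hXvec
  have key : ∀ p : Equiv.Perm (Fin N),
      Measure.map (fun ω => (Y ω, fun k => X (p k) ω)) P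
        = Measure.map (fun ω => (Y ω, fun k => X k ω)) P := by
    intro p
    have hprob1 : IsProbabilityMeasure
        (Measure.map (fun ω => (Y ω, fun k => X (p k) ω)) P) :=
      Measure.isProbabilityMeasure_map (hWmeas p).aemeasurable
    have hprob2 : IsProbabilityMeasure
        (Measure.map (fun ω => (Y ω, fun k => X k ω)) P) :=
      Measure.isProbabilityMeasure_map hW1.aemeasurable
    refine ext_of_generate_finite
      (Set.image2 (· ×ˢ ·) {s : Set ℰ | MeasurableSet s}
        (Set.pi Set.univ '' Set.pi Set.univ fun _ : Fin N =>
          {t : Set 𝓧 | MeasurableSet t}))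
      ?_ ?_ ?_ ?_
    · exact (generateFrom_eq_prod MeasurableSpace.generateFrom_measurableSet generateFrom_pi
        isCountablySpanning_measurableSet
        ⟨fun _ => Set.univ, fun _ => ⟨fun _ => Set.univ, fun _ _ => MeasurableSet.univ,
          Set.pi_univ _⟩, Set.iUnion_const _⟩).symm
    · exact MeasurableSpace.isPiSystem_measurableSet.prod isPiSystem_pi
    · rintro _ ⟨s, hs, _, ⟨t, ht, rfl⟩, rfl⟩
      have hs' : MeasurableSet s := hs
      have ht' : ∀ k, MeasurableSet (t k) := fun k => ht k (Set.mem_univ k)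
      have htset : MeasurableSet (Set.pi Set.univ t) := MeasurableSet.univ_pi ht'
      rw [Measure.map_apply (hWmeas p) (hs'.prod htset),
        Measure.map_apply hW1 (hs'.prod htset)]
      have hpre : ∀ q : Equiv.Perm (Fin N),
          (fun ω => (Y ω, fun k => X (q k) ω)) ⁻¹' (s ×ˢ Set.pi Set.univ t)
            = Y ⁻¹' s ∩ ⋂ k, X (q k) ⁻¹' t k := by
        intro q
        ext ω
        simp [Set.mem_pi]
      have hpre1 : (fun ω => (Y ω, fun k => X k ω)) ⁻¹' (s ×ˢ Set.pi Set.univ t)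
            = Y ⁻¹' s ∩ ⋂ k, X k ⁻¹' t k := by
        ext ω
        simp [Set.mem_pi]
      rw [hpre p, hpre1]
      have hre : (⋂ k, X (p k) ⁻¹' t k) = ⋂ j, X j ⁻¹' t (p.symm j) := by
        have := p.surjective.iInter_comp (fun j => X j ⁻¹' t (p.symm j))
        simpa using this
      rw [hre, hcalc s hs' (fun j => t (p.symm j)) (fun j => ht' _),
        hcalc s hs' t ht']
      congr 1
      calc ∏ j, P (X j ⁻¹' t (p.symm j))
          = ∏ j, P (X (p.symm j) ⁻¹' t (p.symm j)) := by
            refine Finset.prod_congr rfl fun j _ => ?_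
            exact (hId j (p.symm j)).measure_mem_eq (ht' _)
        _ = ∏ k, P (X k ⁻¹' t k) := Equiv.prod_comp p.symm fun k => P (X k ⁻¹' t k)
    · simp
  -- step 3: (H, Rf) and (H, Rf ∘ p) are identically distributed
  have hΦ : Measurable (fun z : ℰ × (Fin N → 𝓧) =>
      ((h z.1 z.2, rankVec fun k => g z.1 (z.2 k)) : 𝓕 × (Fin N → ℕ))) := by
    refine Measurable.prodMk hh ?_
    exact measurable_rankVec.comp (measurable_pi_lambda _ fun k =>
      hg.comp (measurable_fst.prodMk ((measurable_pi_apply k).comp measurable_snd)))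
  have identHR : ∀ p : Equiv.Perm (Fin N),
      IdentDistrib (fun ω => (H ω, Rf ω)) (fun ω => (H ω, fun k => Rf ω (p k))) P P := by
    intro p
    have hW : IdentDistrib (fun ω => (Y ω, fun k => X k ω))
        (fun ω => (Y ω, fun k => X (p k) ω)) P P :=
      ⟨hW1.aemeasurable, (hWmeas p).aemeasurable, (key p).symm⟩
    have := hW.comp hΦ
    have e1 : (fun z : ℰ × (Fin N → 𝓧) =>
          ((h z.1 z.2, rankVec fun k => g z.1 (z.2 k)) : 𝓕 × (Fin N → ℕ)))
        ∘ (fun ω => (Y ω, fun k => X (p k) ω))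
        = fun ω => (H ω, fun k => Rf ω (p k)) := by
      funext ω
      simp only [Function.comp_apply, hHdef, hRdef]
      refine Prod.ext ?_ ?_
      · exact hsymm (Y ω) (fun k => X k ω) p
      · exact rankVec_comp_perm (fun k => g (Y ω) (X k ω)) p
    have e2 : (fun z : ℰ × (Fin N → 𝓧) =>
          ((h z.1 z.2, rankVec fun k => g z.1 (z.2 k)) : 𝓕 × (Fin N → ℕ)))
        ∘ (fun ω => (Y ω, fun k => X k ω)) = fun ω => (H ω, Rf ω) := rfl
    rw [e1, e2] at this
    exact this
  -- step 4: the measure of {H ∈ A, Rf = t} is invariant under permuting t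
  set tq : Equiv.Perm (Fin N) → (Fin N → ℕ) := fun q k => (q k : ℕ) + 1 with htq
  have key2 : ∀ (A : Set 𝓕), MeasurableSet A → ∀ (t : Fin N → ℕ) (q : Equiv.Perm (Fin N)),
      P (H ⁻¹' A ∩ Rf ⁻¹' {t ∘ q}) = P (H ⁻¹' A ∩ Rf ⁻¹' {t}) := by
    intro A hA t q
    have hmem := (identHR q).measure_mem_eq
      (s := A ×ˢ ({t ∘ q} : Set (Fin N → ℕ))) (hA.prod (measurableSet_singleton _))
    rw [Set.mk_preimage_prod, Set.mk_preimage_prod] at hmem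
    have hset : (fun ω => fun k => Rf ω (q k)) ⁻¹' {t ∘ q} = Rf ⁻¹' {(t ∘ q) ∘ q.symm} := by
      ext ω
      simp only [Set.mem_preimage, Set.mem_singleton_iff]
      constructor
      · intro he
        funext j
        have := congrFun he (q.symm j)
        simpa using this
      · intro he
        funext k
        have := congrFun he (q k)
        simpa using this
    have hts : (t ∘ q) ∘ q.symm = t := by
      funext j; simp
    rw [hset, hts] at hmem
    exact hmem
  -- step 5: a.s. the rank vector is a permutation rank
  have hae : ∀ᵐ ω ∂P, ∃ q : Equiv.Perm (Fin N), Rf ω = tq q := by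
    filter_upwards [hdist] with ω hω
    exact rankVec_exists_perm _ hω
  have tq_inj : Function.Injective tq := by
    intro q q' hqq'
    ext k
    have hk := congrFun hqq' k
    simp only [htq] at hk
    omega
  have tq1 : ∀ q : Equiv.Perm (Fin N), tq 1 ∘ q = tq q := by
    intro q; funext k; simp [htq]
  -- step 6: counting
  have count : ∀ (A : Set 𝓕), MeasurableSet A → ∀ B : Set (Fin N → ℕ),
      P (H ⁻¹' A ∩ Rf ⁻¹' B)
        = ((Finset.univ.filter fun q : Equiv.Perm (Fin N) => tq q ∈ B).card : ℝ≥0∞)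
            * P (H ⁻¹' A ∩ Rf ⁻¹' {tq 1}) := by
    intro A hA B
    have hGae : (H ⁻¹' A ∩ Rf ⁻¹' B : Set Ω)
        =ᵐ[P] ⋃ q ∈ (Finset.univ.filter fun q : Equiv.Perm (Fin N) => tq q ∈ B),
          (H ⁻¹' A ∩ Rf ⁻¹' {tq q}) := by
      rw [Filter.eventuallyEq_set]
      filter_upwards [hae] with ω hω
      simp only [Set.mem_inter_iff, Set.mem_iUnion, Set.mem_preimage,
        Set.mem_singleton_iff, Finset.mem_filter, Finset.mem_univ, true_and,
        exists_prop]
      constructor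
      · rintro ⟨hωA, hωB⟩
        obtain ⟨q, hq⟩ := hω
        exact ⟨q, hq ▸ hωB, hωA, hq⟩
      · rintro ⟨q, hqB, hωA, hωt⟩
        exact ⟨hωA, hωt ▸ hqB⟩
    rw [measure_congr hGae, measure_biUnion_finset ?disj ?meas]
    case disj =>
      intro q _ q' _ hne
      simp only [Function.onFun]
      rw [Set.disjoint_left]
      rintro ω ⟨_, hω1⟩ ⟨_, hω2⟩
      simp only [Set.mem_preimage, Set.mem_singleton_iff] at hω1 hω2
      exact hne (tq_inj (hω1.symm.trans hω2))
    case meas =>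
      intro q _
      exact (hHmeas hA).inter (hRmeas (measurableSet_singleton _))
    have hterm : ∀ q ∈ (Finset.univ.filter fun q : Equiv.Perm (Fin N) => tq q ∈ B),
        P (H ⁻¹' A ∩ Rf ⁻¹' {tq q}) = P (H ⁻¹' A ∩ Rf ⁻¹' {tq 1}) := by
      intro q _
      have := key2 A hA (tq 1) q
      rwa [tq1 q] at this
    rw [Finset.sum_congr rfl hterm, Finset.sum_const, nsmul_eq_mul]
  -- step 7: conclusion
  rw [indepFun_iff_measure_inter_preimage_eq_mul]
  intro A B hA hB
  have c1 := count A hA B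
  have c2 := count A hA Set.univ
  have c3 := count Set.univ MeasurableSet.univ B
  have c4 := count Set.univ MeasurableSet.univ Set.univ
  simp only [Set.preimage_univ, Set.inter_univ, Set.univ_inter, Set.mem_univ,
    Finset.filter_true] at c2 c3 c4
  have hMU : ((Finset.univ : Finset (Equiv.Perm (Fin N))).card : ℝ≥0∞)
      * P (Rf ⁻¹' {tq 1}) = 1 := c4.symm.trans measure_univ
  rw [c1, c2, c3]
  have : ((Finset.univ : Finset (Equiv.Perm (Fin N))).card : ℝ≥0∞)
        * P (H ⁻¹' A ∩ Rf ⁻¹' {tq 1})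
        * (((Finset.univ.filter fun q : Equiv.Perm (Fin N) => tq q ∈ B).card : ℝ≥0∞)
          * P (Rf ⁻¹' {tq 1}))
      = ((Finset.univ.filter fun q : Equiv.Perm (Fin N) => tq q ∈ B).card : ℝ≥0∞)
        * P (H ⁻¹' A ∩ Rf ⁻¹' {tq 1})
        * (((Finset.univ : Finset (Equiv.Perm (Fin N))).card : ℝ≥0∞)
          * P (Rf ⁻¹' {tq 1})) := by ring
  rw [this, hMU, mul_one]
end

section
/- The random variable V = (R − U)/K is uniformly distributed on the interval (0,1); that is, the law of V is the normalized Lebesgue measure on (0,1). -/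
open MeasureTheory ProbabilityTheory
open scoped ENNReal NNReal

lemma map_affine_volume (j K : ℝ) (hK : 0 < K) :
    Measure.map (fun x : ℝ => (j - x)/K) volume = ENNReal.ofReal K • volume := by
  have h : (fun x : ℝ => (j - x)/K) = (fun y : ℝ => K⁻¹ * y) ∘ (fun x : ℝ => j - x) := by
    ext x; simp [div_eq_inv_mul]
  rw [h, ← Measure.map_map (by fun_prop) (by fun_prop),
    (Measure.measurePreserving_sub_left volume j).map_eq,
    Real.map_volume_mul_left (a := K⁻¹) (by positivity)]
  congr 1
  rw [inv_inv, abs_of_pos hK]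

/-- If `R` is uniform on `{1,…,K}`, `U` is uniform on `(0,1)`, and `R` and `U` are
independent, then `V = (R − U)/K` is uniformly distributed on `(0,1)`: the law of `V`
is the (normalized) Lebesgue measure on `(0,1)`. -/
theorem rank_minus_uniform_div_uniform
    {Ω : Type*} [MeasurableSpace Ω] (P : Measure Ω) [IsProbabilityMeasure P]
    (K : ℕ) (hK : 1 ≤ K)
    (R : Ω → ℕ) (hR : Measurable R)
    -- R is uniformly distributed on {1,…,K}
    (hRlaw : ∀ j ∈ Finset.Icc 1 K, P {ω | R ω = j} = (K : ℝ≥0∞)⁻¹)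
    (U : Ω → ℝ) (hU : Measurable U)
    -- U is uniformly distributed on (0,1)
    (hUlaw : Measure.map U P = volume.restrict (Set.Ioo (0 : ℝ) 1))
    -- R and U are independent
    (hInd : IndepFun R U P) :
    Measure.map (fun ω => ((R ω : ℝ) - U ω) / K) P
      = volume.restrict (Set.Ioo (0 : ℝ) 1) := by
  have hKR : (0:ℝ) < K := by exact_mod_cast hK
  have hK0 : (K : ℝ≥0∞) ≠ 0 := by exact_mod_cast (by omega : K ≠ 0)
  have hKtop : (K : ℝ≥0∞) ≠ ⊤ := ENNReal.natCast_ne_top K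
  set V : Ω → ℝ := fun ω => ((R ω : ℝ) - U ω) / K with hV_def
  have hV : Measurable V := (((measurable_from_nat.comp hR)).sub hU).div_const _
  -- the intervals
  set I : ℕ → Set ℝ := fun j => Set.Ioo (((j:ℝ)-1)/K) ((j:ℝ)/K) with hI_def
  set T : ℕ → ℝ → ℝ := fun j x => ((j:ℝ) - x)/K with hT_def
  have hT : ∀ j, Measurable (T j) := fun j => (measurable_const.sub measurable_id).div_const _
  -- disjointness of the events {R = j}
  have hAdisj : (↑(Finset.Icc 1 K) : Set ℕ).PairwiseDisjoint (fun j => R ⁻¹' {j}) := by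
    intro i _ j _ hij
    exact Set.disjoint_left.mpr fun ω hi hj => hij (by
      simp only [Set.mem_preimage, Set.mem_singleton_iff] at hi hj; rw [← hi, ← hj])
  have hAmeas : ∀ j, MeasurableSet (R ⁻¹' {j} : Set Ω) := fun j => hR (measurableSet_singleton j)
  have hRj : ∀ j ∈ Finset.Icc 1 K, P (R ⁻¹' {j}) = (K : ℝ≥0∞)⁻¹ := by
    intro j hj
    exact hRlaw j hj
  -- total measure
  have hAfull : P (⋃ j ∈ Finset.Icc 1 K, R ⁻¹' {j})ᶜ = 0 := by
    have h1 : P (⋃ j ∈ Finset.Icc 1 K, R ⁻¹' {j}) = 1 := by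
      rw [measure_biUnion_finset hAdisj (fun j _ => hAmeas j)]
      rw [Finset.sum_congr rfl hRj, Finset.sum_const, Nat.card_Icc]
      simp only [Nat.add_sub_cancel, nsmul_eq_mul]
      exact ENNReal.mul_inv_cancel hK0 hKtop
    rw [measure_compl (Finset.measurableSet_biUnion _ fun j _ => hAmeas j) (measure_ne_top _ _),
      h1, measure_univ, tsub_self]
  refine Measure.ext fun s hs => ?_
  rw [Measure.map_apply hV hs, Measure.restrict_apply hs]
  -- per-j computation
  have key : ∀ j ∈ Finset.Icc 1 K, P (V ⁻¹' s ∩ R ⁻¹' {j}) = volume (s ∩ I j) := by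
    intro j hj
    have hset : V ⁻¹' s ∩ R ⁻¹' {j} = R ⁻¹' {j} ∩ U ⁻¹' (T j ⁻¹' s) := by
      ext ω
      simp only [Set.mem_inter_iff, Set.mem_preimage, Set.mem_singleton_iff, hV_def, hT_def]
      constructor
      · rintro ⟨hmem, hRω⟩; exact ⟨hRω, by rwa [hRω] at hmem⟩
      · rintro ⟨hRω, hmem⟩; exact ⟨by rwa [hRω], hRω⟩
    rw [hset, hInd.measure_inter_preimage_eq_mul _ _ (measurableSet_singleton j) (hT j hs),
      hRj j hj, ← Measure.map_apply hU (hT j hs), hUlaw,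
      Measure.restrict_apply (hT j hs)]
    have hset2 : T j ⁻¹' s ∩ Set.Ioo (0:ℝ) 1 = T j ⁻¹' (s ∩ I j) := by
      ext x
      simp only [Set.mem_inter_iff, Set.mem_preimage, Set.mem_Ioo, hT_def, hI_def]
      constructor
      · rintro ⟨hmem, hx0, hx1⟩
        refine ⟨hmem, ?_, ?_⟩
        · rw [div_lt_div_iff₀ hKR hKR]; nlinarith
        · rw [div_lt_div_iff₀ hKR hKR]; nlinarith
      · rintro ⟨hmem, h1, h2⟩
        rw [div_lt_div_iff₀ hKR hKR] at h1 h2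
        exact ⟨hmem, by nlinarith, by nlinarith⟩
    rw [hset2]
    have hmap : volume (T j ⁻¹' (s ∩ I j)) = (K : ℝ≥0∞) * volume (s ∩ I j) := by
      have := map_affine_volume (j : ℝ) K hKR
      rw [← Measure.map_apply (hT j) (hs.inter measurableSet_Ioo)] at *
      rw [hT_def]
      rw [this]
      simp [ENNReal.ofReal_natCast]; rfl
    rw [hmap, ← mul_assoc, ENNReal.inv_mul_cancel hK0 hKtop, one_mul]
  -- LHS decomposition
  have lhs_eq : P (V ⁻¹' s) = ∑ j ∈ Finset.Icc 1 K, P (V ⁻¹' s ∩ R ⁻¹' {j}) := by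
    rw [← measure_inter_conull hAfull, Set.inter_iUnion₂]
    exact measure_biUnion_finset
      (hAdisj.mono_on fun j _ => Set.inter_subset_right)
      (fun j _ => (hV hs).inter (hAmeas j))
  -- RHS decomposition
  have hIdisj : (↑(Finset.Icc 1 K) : Set ℕ).PairwiseDisjoint I := by
    intro i hi j hj hij
    wlog h : i < j generalizing i j
    · exact (this hj hi hij.symm (by omega)).symm
    refine Set.disjoint_left.mpr fun x hxi hxj => ?_
    simp only [hI_def, Set.mem_Ioo] at hxi hxj
    have hc := (div_lt_div_iff₀ hKR hKR).mp (hxj.1.trans hxi.2)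
    have hij' : (i:ℝ) + 1 ≤ j := by exact_mod_cast h
    nlinarith
  have hIsub : (⋃ j ∈ Finset.Icc 1 K, I j) ⊆ Set.Ioo (0:ℝ) 1 := by
    intro x hx
    simp only [Set.mem_iUnion, Finset.mem_Icc, Set.mem_Ioo, hI_def, exists_prop] at hx ⊢
    obtain ⟨j, ⟨hj1, hjK⟩, h1, h2⟩ := hx
    have hj1' : (1:ℝ) ≤ j := by exact_mod_cast hj1
    have hjK' : (j:ℝ) ≤ K := by exact_mod_cast hjK
    constructor
    · have h0 : (0:ℝ) ≤ ((j:ℝ)-1)/K := div_nonneg (by linarith) hKR.le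
      linarith
    · have h0 : (j:ℝ)/K ≤ 1 := by rw [div_le_one hKR]; exact hjK'
      linarith
  have hnull : volume (Set.Ioo (0:ℝ) 1 \ ⋃ j ∈ Finset.Icc 1 K, I j) = 0 := by
    refine measure_mono_null (t := ⋃ j ∈ Finset.Icc 1 K, {((j:ℝ)/K)}) ?_ ?_
    · rintro x ⟨⟨hx0, hx1⟩, hxn⟩
      set j := ⌈(K:ℝ) * x⌉₊ with hj
      have hKx : 0 < (K:ℝ) * x := by positivity
      have hj1 : 1 ≤ j := Nat.one_le_ceil_iff.mpr hKx
      have hjK : j ≤ K := Nat.ceil_le.mpr (by nlinarith)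
      have hub : (K:ℝ) * x ≤ j := Nat.le_ceil _
      have hlb : (j:ℝ) - 1 < K * x := by
        have := Nat.ceil_lt_add_one hKx.le
        linarith
      have hxle : x ≤ (j:ℝ)/K := (le_div_iff₀ hKR).mpr (by linarith)
      have hxgt : ((j:ℝ)-1)/K < x := (div_lt_iff₀ hKR).mpr (by linarith)
      have hjmem : j ∈ Finset.Icc 1 K := Finset.mem_Icc.mpr ⟨hj1, hjK⟩
      have hnot : x ∉ I j := fun hmem => hxn (Set.mem_biUnion hjmem hmem)
      have hxlt : ¬ x < (j:ℝ)/K := fun h => hnot ⟨hxgt, h⟩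
      have hxeq : x = (j:ℝ)/K := le_antisymm hxle (not_lt.mp hxlt)
      exact Set.mem_biUnion hjmem (by simp [hxeq])
    · exact ((measure_biUnion_null_iff (Finset.Icc 1 K).countable_toSet).mpr
        fun j _ => measure_singleton _)
  have hIunion : volume (s ∩ ⋃ j ∈ Finset.Icc 1 K, I j) = volume (s ∩ Set.Ioo (0:ℝ) 1) := by
    apply le_antisymm
    · exact measure_mono (Set.inter_subset_inter_right _ hIsub)
    · calc volume (s ∩ Set.Ioo (0:ℝ) 1)
          ≤ volume ((s ∩ ⋃ j ∈ Finset.Icc 1 K, I j) ∪ (Set.Ioo (0:ℝ) 1 \ ⋃ j ∈ Finset.Icc 1 K, I j)) := by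
            apply measure_mono
            rintro x ⟨hxs, hxI⟩
            by_cases h : x ∈ ⋃ j ∈ Finset.Icc 1 K, I j
            · exact Or.inl ⟨hxs, h⟩
            · exact Or.inr ⟨hxI, h⟩
        _ ≤ volume (s ∩ ⋃ j ∈ Finset.Icc 1 K, I j) + volume (Set.Ioo (0:ℝ) 1 \ ⋃ j ∈ Finset.Icc 1 K, I j) := measure_union_le _ _
        _ = volume (s ∩ ⋃ j ∈ Finset.Icc 1 K, I j) := by rw [hnull, add_zero]
  have rhs_eq : volume (s ∩ Set.Ioo (0:ℝ) 1) = ∑ j ∈ Finset.Icc 1 K, volume (s ∩ I j) := by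
    rw [← hIunion, Set.inter_iUnion₂]
    exact measure_biUnion_finset
      (hIdisj.mono_on fun j _ => Set.inter_subset_right)
      (fun j _ => hs.inter measurableSet_Ioo)
  rw [lhs_eq, rhs_eq]
  exact Finset.sum_congr rfl key
end
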